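/- arXiv:1511.07729 — 7 statements merged into one kernel-verified Lean document; each statement's English description precedes it below -/
import Mathlib

section
/- There exists k₀ such that for all integers k ≥ k₀, there is a code C ⊆ {0,1}^k of size at least 2^{k/2} that can correct ⌈4·log₂(k)⌉ deletion errors; i.e., no string in {0,1}^{k−⌈4 log₂ k⌉} can be obtained from two distinct codewords of C each by deleting ⌈4 log₂ k⌉ symbols. -/
/-!
A Gilbert–Varshamov (greedy) argument. Call two words of length `k` in conflict when they share
a subsequence of length `k - d`. A conflicting `y` arises from `x` by `d` deletions followed by
`d` insertions, so each word conflicts with at most `k ^ d * (2 * k) ^ d` words, and a maximal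
conflict-free set of words has at least `2 ^ k / (k ^ d * (2 * k) ^ d)` elements. For
`d = ⌈4 log₂ k⌉` the denominator is `2 ^ O((log k) ^ 2)`, which is at most `2 ^ (k / 2)` once
`k ≥ 2 ^ 13`.
-/

open Finset

namespace Finset

theorem exists_pairwise_not_rel_card_le_mul {α : Type*} (r : α → α → Prop) [DecidableRel r]
    (hsymm : ∀ x y, r x y → r y x) (S : Finset α) (hrefl : ∀ x ∈ S, r x x) (B : ℕ)
    (hB : ∀ x ∈ S, #{y ∈ S | r x y} ≤ B) :
    ∃ T ⊆ S, (T : Set α).Pairwise (fun x y => ¬ r x y) ∧ #S ≤ B * #T := by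
  classical
  obtain ⟨T, hT, hmax⟩ := exists_max_image
    (S.powerset.filter fun T : Finset α => (T : Set α).Pairwise (fun x y => ¬ r x y)) card
    ⟨∅, by simp⟩
  rw [mem_filter, mem_powerset] at hT
  refine ⟨T, hT.1, hT.2, ?_⟩
  have hcover : S ⊆ T.biUnion fun t => {y ∈ S | r t y} := by
    intro x hx
    by_contra hnot
    simp only [mem_biUnion, mem_filter, not_exists, not_and] at hnot
    have hxT : x ∉ T := fun h => hnot x h hx (hrefl x hx)
    have := hmax (insert x T) (mem_filter.2 ⟨mem_powerset.2 (insert_subset hx hT.1), ?_⟩)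
    · rw [card_insert_of_notMem hxT] at this; omega
    rw [coe_insert]
    exact hT.2.insert fun t ht _ => ⟨fun h => hnot t ht hx (hsymm _ _ h), hnot t ht hx⟩
  calc #S ≤ #(T.biUnion fun t => {y ∈ S | r t y}) := card_le_card hcover
    _ ≤ ∑ t ∈ T, #{y ∈ S | r t y} := card_biUnion_le
    _ ≤ ∑ _t ∈ T, B := sum_le_sum fun t ht => hB t (hT.1 ht)
    _ = B * #T := by rw [sum_const, smul_eq_mul, mul_comm]

end Finset

section

variable {α : Type*}

def HasCommonSublist (n : ℕ) (x y : List α) : Prop :=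
  ∃ z : List α, z.length = n ∧ z.Sublist x ∧ z.Sublist y

lemma HasCommonSublist.symm {n : ℕ} {x y : List α} (h : HasCommonSublist n x y) :
    HasCommonSublist n y x :=
  let ⟨z, hz, hx, hy⟩ := h; ⟨z, hz, hy, hx⟩

lemma hasCommonSublist_self {n : ℕ} {x : List α} (hn : n ≤ x.length) :
    HasCommonSublist n x x :=
  ⟨x.take n, by simpa using hn, List.take_sublist _ _, List.take_sublist _ _⟩

end

variable {α : Type*} [Fintype α] [DecidableEq α]

def insertions : ℕ → List α → Finset (List α)
  | 0, z => {z}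
  | d + 1, z => (insertions d z).biUnion fun y =>
      univ.image fun p : Fin (y.length + 1) × α => y.insertIdx p.1 p.2

lemma mem_insertions_succ {d : ℕ} {z y : List α} :
    y ∈ insertions (d + 1) z ↔
      ∃ w ∈ insertions d z, ∃ i ≤ w.length, ∃ a, w.insertIdx i a = y := by
  simp only [insertions, mem_biUnion, mem_image, mem_univ, true_and, Prod.exists]
  refine exists_congr fun w => and_congr_right fun _ => ⟨?_, ?_⟩
  · rintro ⟨i, a, rfl⟩; exact ⟨i, Nat.lt_succ_iff.1 i.2, a, rfl⟩
  · rintro ⟨i, hi, a, rfl⟩; exact ⟨⟨i, Nat.lt_succ_of_le hi⟩, a, rfl⟩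

lemma length_of_mem_insertions {d : ℕ} {z y : List α} (h : y ∈ insertions d z) :
    y.length = z.length + d := by
  induction d generalizing y with
  | zero => simp_all [insertions]
  | succ d ih =>
    obtain ⟨w, hw, i, hi, a, rfl⟩ := mem_insertions_succ.1 h
    rw [List.length_insertIdx_of_le_length hi, ih hw, add_assoc]

lemma card_insertions_le (d : ℕ) (z : List α) :
    #(insertions d z) ≤ ((z.length + d) * Fintype.card α) ^ d := by
  induction d with
  | zero => simp [insertions]
  | succ d ih =>
    calc #(insertions (d + 1) z)
        ≤ ∑ y ∈ insertions d z,
            #(univ.image fun p : Fin (y.length + 1) × α => y.insertIdx p.1 p.2) := card_biUnion_le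
      _ ≤ ∑ _y ∈ insertions d z, (z.length + (d + 1)) * Fintype.card α := by
          refine sum_le_sum fun y hy => card_image_le.trans_eq ?_
          simp [length_of_mem_insertions hy, add_assoc]
      _ ≤ ((z.length + d) * Fintype.card α) ^ d * ((z.length + (d + 1)) * Fintype.card α) := by
          rw [sum_const, smul_eq_mul]; gcongr
      _ ≤ ((z.length + (d + 1)) * Fintype.card α) ^ (d + 1) := by
          rw [pow_succ]; gcongr; omega

lemma cons_mem_insertions {d : ℕ} {z y : List α} (a : α) (h : y ∈ insertions d z) :
    a :: y ∈ insertions d (a :: z) := by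
  induction d generalizing y with
  | zero => simp_all [insertions]
  | succ d ih =>
    obtain ⟨w, hw, i, hi, b, rfl⟩ := mem_insertions_succ.1 h
    exact mem_insertions_succ.2
      ⟨a :: w, ih hw, i + 1, by simpa using hi, b, List.insertIdx_succ_cons⟩

lemma List.Sublist.mem_insertions {z y : List α} (h : z.Sublist y) :
    y ∈ insertions (y.length - z.length) z := by
  induction h with
  | slnil => simp [insertions]
  | @cons z y a h ih =>
    rw [List.length_cons, Nat.sub_add_comm h.length_le]
    exact mem_insertions_succ.2 ⟨y, ih, 0, Nat.zero_le _, a, List.insertIdx_zero⟩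
  | cons_cons a _ ih => simpa using cons_mem_insertions a ih

lemma card_filter_hasCommonSublist_le {k d : ℕ} {x : List α} (hx : x.length = k) (hd : d ≤ k)
    (S : Finset (List α)) [DecidablePred (HasCommonSublist (k - d) x)]
    (hS : ∀ y ∈ S, y.length = k) :
    #{y ∈ S | HasCommonSublist (k - d) x y} ≤ k ^ d * (k * Fintype.card α) ^ d := by
  have hsub : {y ∈ S | HasCommonSublist (k - d) x y}
      ⊆ (x.sublistsLen (k - d)).toFinset.biUnion (insertions d) := by
    intro y hy
    obtain ⟨hyS, z, hz, hzx, hzy⟩ := mem_filter.1 hy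
    refine mem_biUnion.2 ⟨z, List.mem_toFinset.2 (List.mem_sublistsLen.2 ⟨hzx, hz⟩), ?_⟩
    have := hzy.mem_insertions
    rwa [hS y hyS, hz, Nat.sub_sub_self hd] at this
  calc #{y ∈ S | HasCommonSublist (k - d) x y}
      ≤ ∑ z ∈ (x.sublistsLen (k - d)).toFinset, #(insertions d z) :=
        (card_le_card hsub).trans card_biUnion_le
    _ ≤ ∑ _z ∈ (x.sublistsLen (k - d)).toFinset, (k * Fintype.card α) ^ d := by
        refine sum_le_sum fun z hz => (card_insertions_le d z).trans_eq ?_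
        rw [(List.mem_sublistsLen.1 (List.mem_toFinset.1 hz)).2, Nat.sub_add_cancel hd]
    _ ≤ k ^ d * (k * Fintype.card α) ^ d := by
        rw [sum_const, smul_eq_mul]
        gcongr
        calc #(x.sublistsLen (k - d)).toFinset ≤ k.choose (k - d) := by
              simpa [hx] using List.toFinset_card_le (x.sublistsLen (k - d))
          _ = k.choose d := Nat.choose_symm hd
          _ ≤ k ^ d := Nat.choose_le_pow k d

variable (α) in
def finsetOfLength (k : ℕ) : Finset (List α) :=
  univ.image (List.Vector.toList : List.Vector α k → List α)

lemma mem_finsetOfLength {k : ℕ} {x : List α} : x ∈ finsetOfLength α k ↔ x.length = k :=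
  ⟨fun h => by obtain ⟨v, -, rfl⟩ := mem_image.1 h; exact v.toList_length,
    fun h => mem_image.2 ⟨⟨x, h⟩, mem_univ _, rfl⟩⟩

lemma card_finsetOfLength (k : ℕ) : #(finsetOfLength α k) = Fintype.card α ^ k := by
  rw [finsetOfLength, card_image_of_injective _ List.Vector.toList_injective, card_univ,
    card_vector]

theorem exists_code_pairwise_not_hasCommonSublist {k d : ℕ} (hd : d ≤ k) :
    ∃ C : Finset (List α), (∀ x ∈ C, x.length = k) ∧
      (C : Set (List α)).Pairwise (fun x y => ¬ HasCommonSublist (k - d) x y) ∧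
      Fintype.card α ^ k ≤ k ^ d * (k * Fintype.card α) ^ d * #C := by
  classical
  obtain ⟨C, hCS, hC, hcard⟩ := Finset.exists_pairwise_not_rel_card_le_mul
    (HasCommonSublist (k - d)) (fun _ _ => HasCommonSublist.symm) (finsetOfLength α k)
    (fun x hx => hasCommonSublist_self (by rw [mem_finsetOfLength.1 hx]; omega))
    (k ^ d * (k * Fintype.card α) ^ d)
    (fun x hx => card_filter_hasCommonSublist_le (mem_finsetOfLength.1 hx) hd _
      fun y => mem_finsetOfLength.1)
  exact ⟨C, fun x hx => mem_finsetOfLength.1 (hCS hx), hC,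
    card_finsetOfLength (α := α) k ▸ hcard⟩

lemma natCeil_four_mul_logb_le (k : ℕ) : ⌈4 * Real.logb 2 k⌉₊ ≤ 4 * Nat.clog 2 k := by
  refine Nat.ceil_le.2 ?_
  have h := Real.natCeil_logb_natCast 2 k
  push_cast at h
  push_cast
  linarith [h ▸ Nat.le_ceil (Real.logb 2 k)]

lemma sixteen_mul_mul_le_two_pow {c : ℕ} (hc : 13 ≤ c) : 16 * c * (2 * c + 1) ≤ 2 ^ c := by
  induction c, hc using Nat.le_induction with
  | base => norm_num
  | succ c _ ih => rw [pow_succ]; nlinarith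

lemma deletion_count_sq_le_two_pow {k d : ℕ} (hk : 2 ^ 13 ≤ k) (hd : d ≤ 4 * Nat.clog 2 k) :
    d ≤ k ∧ (k ^ d * (k * 2) ^ d) ^ 2 ≤ 2 ^ k := by
  have hc : 13 ≤ Nat.clog 2 k := (Nat.lt_clog_iff_pow_lt one_lt_two).2 (by omega)
  have hkc : k ≤ 2 ^ Nat.clog 2 k := Nat.le_pow_clog one_lt_two k
  have hck : 2 ^ (Nat.clog 2 k - 1) < k := Nat.pow_pred_clog_lt_self one_lt_two (by omega)
  generalize Nat.clog 2 k = c at hc hkc hck hd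
  have hck : 2 ^ c < 2 * k := by
    rw [← Nat.sub_add_cancel (by omega : 1 ≤ c), pow_succ]; omega
  have hpoly : 8 * c * (2 * c + 1) ≤ k := by nlinarith [sixteen_mul_mul_le_two_pow hc]
  refine ⟨by nlinarith, ?_⟩
  calc (k ^ d * (k * 2) ^ d) ^ 2 ≤ ((2 ^ c) ^ d * (2 ^ c * 2) ^ d) ^ 2 := by gcongr
    _ = 2 ^ ((2 * c + 1) * (2 * d)) := by ring
    _ ≤ 2 ^ k := Nat.pow_le_pow_right two_pos (by nlinarith)

lemma two_rpow_half_le_of_sq_le_of_le_mul {k B c : ℕ} (hB : B ^ 2 ≤ 2 ^ k)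
    (hc : 2 ^ k ≤ B * c) :
    (2 : ℝ) ^ ((k : ℝ) / 2) ≤ c := by
  set s : ℝ := (2 : ℝ) ^ ((k : ℝ) / 2)
  have hs : s * s = 2 ^ k := by
    rw [← Real.rpow_add two_pos, add_halves, Real.rpow_natCast]
  have hBs : (B : ℝ) ≤ s := by
    rw [← pow_le_pow_iff_left₀ (Nat.cast_nonneg _) (by positivity) two_ne_zero, sq s, hs]
    exact_mod_cast hB
  have hsc : s * s ≤ B * c := by
    rw [hs]; exact_mod_cast hc
  have hs0 : 0 < s := by positivity
  nlinarith

/-- there is a `k₀` such that for all `k ≥ k₀` there is a binary code of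
length `k` and size at least `2^{k/2}` correcting `⌈4 log₂ k⌉` deletions: no string of
length `k - ⌈4 log₂ k⌉` is a common subsequence of two distinct codewords. -/
theorem exists_deletion_code :
    ∃ k₀ : ℕ, ∀ k : ℕ, k₀ ≤ k →
      ∃ C : Finset (List Bool),
        (∀ x ∈ C, x.length = k) ∧
        (2 : ℝ) ^ ((k : ℝ) / 2) ≤ (C.card : ℝ) ∧
        ∀ x ∈ C, ∀ y ∈ C, x ≠ y →
          ∀ z : List Bool,
            ¬(z.length = k - ⌈4 * Real.logb 2 (k : ℝ)⌉₊ ∧ z.Sublist x ∧ z.Sublist y) := by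
  refine ⟨2 ^ 13, fun k hk => ?_⟩
  obtain ⟨hdk, hcount⟩ := deletion_count_sq_le_two_pow hk (natCeil_four_mul_logb_le k)
  obtain ⟨C, hlen, hC, hcard⟩ := exists_code_pairwise_not_hasCommonSublist (α := Bool) hdk
  exact ⟨C, hlen, two_rpow_half_le_of_sq_le_of_le_mul hcount (by simpa using hcard),
    fun x hx y hy hxy z hz => hC hx hy hxy ⟨z, hz⟩⟩
end

section
/- Let G be a graph on vertex set {0,1}^k where x and y are adjacent iff some string z can be obtained from each of x and y by at most d deletions, where d = ⌈4 log₂ k⌉. Then the maximum degree of G is at most binom(k,d)² · 2^d, and for sufficiently large k this bound is at most 2^{k/2} − 1. -/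
/-!
A neighbour `y` of `x` shares with `x` a common subsequence `z` of length exactly `k - d`.
There are at most `C(k, d)` such `z` inside `x`, and a length-`k` supersequence of `z` is
determined by the `d` positions it adds to `z` and the letters placed there, so there are at
most `C(k, d) · 2^d` of them. For the numerical bound, `C(k, d) ≤ k^d = 2^(d log₂ k)`, and
`d (2 log₂ k + 1) = O(log² k)` is eventually below `k / 2 - 1`.
-/

open Finset Filter Asymptotics

section Supersequences

variable {α : Type*} [Fintype α] [DecidableEq α]

def supersequences (z : List α) (n : ℕ) : Finset (List.Vector α n) :=
  {y | z.Sublist y.toList}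

@[simp]
lemma mem_supersequences {z : List α} {n : ℕ} {y : List.Vector α n} :
    y ∈ supersequences z n ↔ z.Sublist y.toList := by
  simp [supersequences]

lemma supersequences_cons_subset (a : α) (z : List α) (n : ℕ) :
    supersequences (a :: z) (n + 1) ⊆
      (univ ×ˢ supersequences (a :: z) n).image (fun p => p.1 ::ᵥ p.2) ∪
        (supersequences z n).image (a ::ᵥ ·) := by
  intro y hy
  rw [← y.cons_head_tail] at hy ⊢
  rw [mem_supersequences, List.Vector.toList_cons, List.sublist_cons_iff] at hy
  simp only [mem_union, mem_image, mem_product, mem_univ, true_and, mem_supersequences,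
    Prod.exists]
  rcases hy with hy | ⟨r, hr, hsub⟩
  · exact Or.inl ⟨_, _, hy, rfl⟩
  · obtain ⟨rfl, rfl⟩ := List.cons.inj hr
    exact Or.inr ⟨_, hsub, rfl⟩

lemma card_supersequences_le (z : List α) (n : ℕ) :
    #(supersequences z n) ≤ n.choose z.length * Fintype.card α ^ (n - z.length) := by
  induction n generalizing z with
  | zero =>
    cases z with
    | nil => simpa using card_le_univ (supersequences ([] : List α) 0)
    | cons a z => simp [supersequences]
  | succ n ih =>
    cases z with
    | nil => simpa using card_le_univ (supersequences ([] : List α) (n + 1))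
    | cons a z =>
      set q := Fintype.card α
      set m := z.length
      have hskip :
          q * (n.choose (m + 1) * q ^ (n - (m + 1))) ≤ n.choose (m + 1) * q ^ (n - m) := by
        rcases lt_or_ge m n with h | h
        · rw [show n - m = n - (m + 1) + 1 by omega, pow_succ]
          exact (by ring : _ = _).le
        · simp [Nat.choose_eq_zero_of_lt (show n < m + 1 by omega)]
      calc #(supersequences (a :: z) (n + 1))
          ≤ #((univ ×ˢ supersequences (a :: z) n).image (fun p => p.1 ::ᵥ p.2)) +
              #((supersequences z n).image (a ::ᵥ ·)) :=
            (card_le_card (supersequences_cons_subset a z n)).trans (card_union_le _ _)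
        _ ≤ q * #(supersequences (a :: z) n) + #(supersequences z n) := by
            gcongr
            · exact card_image_le.trans (card_product _ _).le
            · exact card_image_le
        _ ≤ q * (n.choose (m + 1) * q ^ (n - (m + 1))) + n.choose m * q ^ (n - m) := by
            gcongr
            exacts [ih _, ih _]
        _ ≤ (n + 1).choose (m + 1) * q ^ (n + 1 - (m + 1)) := by
            rw [Nat.choose_succ_succ', Nat.add_sub_add_right]
            linarith

lemma ncard_setOf_common_sublist_le (x : List α) (n m : ℕ) :
    {y : List.Vector α n |
        ∃ z : List α, m ≤ z.length ∧ z.Sublist x ∧ z.Sublist y.toList}.ncard ≤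
      x.length.choose m * (n.choose m * Fintype.card α ^ (n - m)) := by
  have hsub : {y : List.Vector α n |
      ∃ z : List α, m ≤ z.length ∧ z.Sublist x ∧ z.Sublist y.toList} ⊆
      ↑((x.sublistsLen m).toFinset.biUnion (supersequences · n)) := by
    rintro y ⟨z, hmz, hzx, hzy⟩
    have htake := z.take_sublist m
    rw [mem_coe, mem_biUnion]
    refine ⟨z.take m, List.mem_toFinset.mpr (List.mem_sublistsLen.mpr ?_), ?_⟩
    · exact ⟨htake.trans hzx, by simpa using hmz⟩
    · exact mem_supersequences.mpr (htake.trans hzy)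
  calc _ ≤ #((x.sublistsLen m).toFinset.biUnion (supersequences · n)) :=
        (Set.ncard_le_ncard hsub (finite_toSet _)).trans_eq (Set.ncard_coe_finset _)
    _ ≤ #(x.sublistsLen m).toFinset * (n.choose m * Fintype.card α ^ (n - m)) := by
        refine card_biUnion_le_card_mul _ _ _ fun z hz => ?_
        obtain ⟨-, rfl⟩ := List.mem_sublistsLen.mp (List.mem_toFinset.mp hz)
        exact card_supersequences_le z n
    _ ≤ x.length.choose m * (n.choose m * Fintype.card α ^ (n - m)) := by
        gcongr
        exact (List.toFinset_card_le _).trans (List.length_sublistsLen m x).le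

end Supersequences

lemma eventually_logb_quadratic_le_half :
    ∀ᶠ k : ℕ in atTop,
      (4 * Real.logb 2 k + 1) * (2 * Real.logb 2 k + 1) + 1 ≤ (k : ℝ) / 2 := by
  have hlo : (fun x : ℝ => 8 * Real.logb 2 x ^ 2 + 6 * Real.logb 2 x + 2) =o[atTop] id :=
    ((Real.isLittleO_pow_logb_id_atTop.const_mul_left 8).add
      (Real.isLittleO_logb_id_atTop.const_mul_left 6)).add (isLittleO_const_id_atTop 2)
  have hreal :
      ∀ᶠ x : ℝ in atTop, (4 * Real.logb 2 x + 1) * (2 * Real.logb 2 x + 1) + 1 ≤ x / 2 := by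
    filter_upwards [hlo.def (c := 1 / 2) (by norm_num), eventually_ge_atTop 0] with x hx hx0
    rw [Real.norm_eq_abs, Real.norm_eq_abs, id, abs_of_nonneg hx0] at hx
    linarith [le_abs_self (8 * Real.logb 2 x ^ 2 + 6 * Real.logb 2 x + 2)]
  exact tendsto_natCast_atTop_atTop.eventually hreal

lemma choose_sq_mul_two_pow_le_rpow (k d : ℕ) (hk : 0 < k) :
    ((k.choose d ^ 2 * 2 ^ d : ℕ) : ℝ) ≤ 2 ^ (d * (2 * Real.logb 2 k + 1)) := by
  have hk' : (k : ℝ) = 2 ^ Real.logb 2 k :=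
    (Real.rpow_logb two_pos (by norm_num) (by positivity)).symm
  calc ((k.choose d ^ 2 * 2 ^ d : ℕ) : ℝ) ≤ ((k : ℝ) ^ d) ^ 2 * 2 ^ d := by
        push_cast
        gcongr
        exact_mod_cast Nat.choose_le_pow k d
    _ = 2 ^ (d * (2 * Real.logb 2 k + 1)) := by
        rw [show (d : ℝ) * (2 * Real.logb 2 k + 1) = Real.logb 2 k * (2 * d : ℕ) + d by
            push_cast; ring, Real.rpow_add two_pos, Real.rpow_mul two_pos.le, Real.rpow_natCast,
          Real.rpow_natCast, ← hk', pow_mul']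

lemma two_rpow_sub_one_le {t : ℝ} (ht : 1 ≤ t) : (2 : ℝ) ^ (t - 1) ≤ 2 ^ t - 1 := by
  have h : (2 : ℝ) ^ t = 2 ^ (t - 1) * 2 := by
    rw [← Real.rpow_add_one two_ne_zero]; ring_nf
  have h1 : (1 : ℝ) ≤ 2 ^ (t - 1) := Real.one_le_rpow (by norm_num) (by linarith)
  linarith

/-- in the graph on `{0,1}^k` where `x ~ y` iff some string `z` is obtainable
from each of `x` and `y` by at most `d = ⌈4 log₂ k⌉` deletions (i.e. `z` is a common
subsequence of length at least `k - d`), every vertex has degree at most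
`C(k,d)² · 2^d`, and for sufficiently large `k` this bound is at most `2^{k/2} - 1`. -/
theorem deletion_graph_degree_bound :
    ∃ K : ℕ, ∀ k : ℕ, K ≤ k →
      (∀ x : {l : List Bool // l.length = k},
        {y : {l : List Bool // l.length = k} |
            x ≠ y ∧ ∃ z : List Bool,
              k - ⌈4 * Real.logb 2 (k : ℝ)⌉₊ ≤ z.length ∧
              z.Sublist x.1 ∧ z.Sublist y.1}.ncard ≤
          (k.choose ⌈4 * Real.logb 2 (k : ℝ)⌉₊) ^ 2 * 2 ^ ⌈4 * Real.logb 2 (k : ℝ)⌉₊) ∧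
      (((k.choose ⌈4 * Real.logb 2 (k : ℝ)⌉₊) ^ 2 *
          2 ^ ⌈4 * Real.logb 2 (k : ℝ)⌉₊ : ℕ) : ℝ) ≤ 2 ^ ((k : ℝ) / 2) - 1 := by
  obtain ⟨K, hK⟩ :=
    eventually_atTop.mp (eventually_logb_quadratic_le_half.and (eventually_ge_atTop 1))
  refine ⟨K, fun k hKk => ?_⟩
  obtain ⟨hlog, hk⟩ := hK k hKk
  set L := Real.logb 2 (k : ℝ)
  set d := ⌈4 * L⌉₊
  have hL : 0 ≤ L := Real.logb_nonneg one_lt_two (by exact_mod_cast hk)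
  have hd : (d : ℝ) ≤ 4 * L + 1 := (Nat.ceil_lt_add_one (by positivity)).le
  have hdexp : (d : ℝ) * (2 * L + 1) ≤ k / 2 - 1 := by nlinarith
  have hdk : d ≤ k := by exact_mod_cast (show (d : ℝ) ≤ k by nlinarith)
  refine ⟨fun x => ?_, ?_⟩
  -- `List.Vector Bool k` is by definition `{l : List Bool // l.length = k}`.
  · calc _ ≤ {y : List.Vector Bool k | ∃ z : List Bool,
            k - d ≤ z.length ∧ z.Sublist x.1 ∧ z.Sublist y.toList}.ncard :=
          Set.ncard_le_ncard (fun y hy => hy.2) (Set.toFinite _)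
      _ ≤ k.choose (k - d) * (k.choose (k - d) * Fintype.card Bool ^ (k - (k - d))) := by
          simpa only [x.2] using ncard_setOf_common_sublist_le x.1 k (k - d)
      _ = k.choose d ^ 2 * 2 ^ d := by
          rw [Nat.choose_symm hdk, Nat.sub_sub_self hdk, Fintype.card_bool]; ring
  · calc _ ≤ (2 : ℝ) ^ (d * (2 * L + 1)) := choose_sq_mul_two_pow_le_rpow k d (by omega)
      _ ≤ 2 ^ ((k : ℝ) / 2 - 1) := Real.rpow_le_rpow_of_exponent_le one_le_two hdexp
      _ ≤ 2 ^ ((k : ℝ) / 2) - 1 := two_rpow_sub_one_le (by nlinarith)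
end

section
/- Every assignment-oblivious protocol for the communication game G_n has cost at least log₂(n)/2; in particular there is an edge of E(Π) colliding with at least ⌈log₂ n⌉ other edges of E(Π), so some vertex of the graph E(Π) has degree at least ⌈log₂(n)/2⌉. -/
/-- The bit written by an assignment-oblivious protocol `B` at location `ℓ` on stream `σ`:
it depends only on `ℓ` and the set of locations arriving before `ℓ`. -/
def writeAO {n : ℕ} (B : Fin n → Finset (Fin n) → Bool) (σ : Equiv.Perm (Fin n))
    (ℓ : Fin n) : Bool :=
  B ℓ (Finset.univ.filter fun m : Fin n => σ.symm m < σ.symm ℓ)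

/-- The hypercube edge `Π_A(σ)` of the assignment-oblivious protocol `B`: the array after
the first `n - 1` arrivals, with the free (`none`) coordinate at the last location. -/
def edgeAO {n : ℕ} (B : Fin n → Finset (Fin n) → Bool) (σ : Equiv.Perm (Fin n)) :
    Fin n → Option Bool :=
  fun ℓ => if (σ.symm ℓ : ℕ) = n - 1 then none else some (writeAO B σ ℓ)

/-- `v ∈ {0,1}^n` is an endpoint of the edge `e` (with `*` encoded as `none`). -/
def Compatible {n : ℕ} (v : Fin n → Bool) (e : Fin n → Option Bool) : Prop :=
  ∀ ℓ b, e ℓ = some b → v ℓ = b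

/-- The degree of `v` in the graph `E(Π)` of the assignment-oblivious protocol `B`. -/
noncomputable def degAO {n : ℕ} (B : Fin n → Finset (Fin n) → Bool)
    (v : Fin n → Bool) : ℕ :=
  {e : Fin n → Option Bool | (∃ σ : Equiv.Perm (Fin n), edgeAO B σ = e) ∧
    Compatible v e}.ncard

/-!
Choose pivots `r₁, …, r_m` greedily from a shrinking pool, starting from all locations: once
`r₁, …, rⱼ` are chosen, the bit Alice writes at `rⱼ` when everything except `r₁, …, rⱼ` and one
further location `u` has arrived 2-colours the pool in `u`, and the pool shrinks to the larger
colour class. Since `2 ^ (m + 1) ≤ n + 1`, some `r₀` is still left after `m` steps. Take a stream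
ending with `r_m, …, r₁, r₀` and, for each `k`, the stream obtained from it by exchanging `r_k`
and `r₀`. Its edge has free location `r_k` and agrees with the reference edge everywhere except
at `r₀`: at a pivot `rⱼ` with `j < k` because `r_k` and `r₀` received the same colour at step `j`.
So if `b` is the majority of the bits written at `r₀`, the vertex that carries the reference
edge's bits and `b` at `r₀` lies on at least `m / 2 + 1` edges, and `m + 2 > log₂ n`.
-/

open Finset

lemma exists_card_le_two_mul_card_filter_eq {ι : Type*} (s : Finset ι) (f : ι → Bool) :
    ∃ b, #s ≤ 2 * #(s.filter (f · = b)) := by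
  have hsplit := card_filter_add_card_filter_not (s := s) (p := (f · = true))
  simp only [Bool.not_eq_true] at hsplit
  by_cases h : #s ≤ 2 * #(s.filter (f · = true))
  · exact ⟨true, h⟩
  · exact ⟨false, by omega⟩

lemma image_Icc_one_ite {α : Type*} [DecidableEq α] (x : α) (r : ℕ → α) {j : ℕ} (hj : 1 ≤ j) :
    (Icc 1 j).image (fun i => if i = 1 then x else r (i - 1)) =
      insert x ((Icc 1 (j - 1)).image r) := by
  ext y
  simp only [mem_image, mem_insert, mem_Icc]
  constructor
  · rintro ⟨i, ⟨hi1, hij⟩, rfl⟩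
    by_cases hi : i = 1
    · exact Or.inl (if_pos hi)
    · exact Or.inr ⟨i - 1, by omega, (if_neg hi).symm⟩
  · rintro (rfl | ⟨i, hi, rfl⟩)
    · exact ⟨1, by omega, if_pos rfl⟩
    · refine ⟨i + 1, by omega, ?_⟩
      rw [if_neg (by omega), Nat.add_sub_cancel]

theorem exists_homogeneous_pivots {α : Type*} [DecidableEq α] (m : ℕ) (P : Finset α)
    (hP : 2 ^ (m + 1) ≤ #P + 1) (c : α → Finset α → α → Bool) :
    ∃ r : ℕ → α, (∀ i ≤ m, r i ∈ P) ∧ Set.InjOn r (Set.Iic m) ∧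
      ∀ j k, 1 ≤ j → j < k → k ≤ m →
        c (r j) ((Icc 1 j).image r) (r k) = c (r j) ((Icc 1 j).image r) (r 0) := by
  induction m generalizing P c with
  | zero =>
    obtain ⟨x, hx⟩ : P.Nonempty := card_pos.mp (by rw [zero_add, pow_one] at hP; omega)
    refine ⟨fun _ => x, fun _ _ => hx, fun i hi i' hi' _ => ?_, by omega⟩
    rw [Set.mem_Iic] at hi hi'
    omega
  | succ m ih =>
    obtain ⟨x, hx⟩ : P.Nonempty :=
      card_pos.mp (by have := Nat.one_le_two_pow (n := m + 1 + 1); omega)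
    obtain ⟨b, hb⟩ := exists_card_le_two_mul_card_filter_eq (P.erase x) (c x {x})
    set Q := (P.erase x).filter (c x {x} · = b)
    have hQ : 2 ^ (m + 1) ≤ #Q + 1 := by
      rw [card_erase_of_mem hx] at hb
      rw [pow_succ] at hP
      omega
    obtain ⟨r, hrQ, hr_inj, hr_hom⟩ := ih Q hQ fun y H u => c y (insert x H) u
    have hrP : ∀ i ≤ m, r i ∈ P.erase x := fun i hi => mem_of_mem_filter _ (hrQ i hi)
    have hr_col : ∀ i ≤ m, c x {x} (r i) = b := fun i hi => (mem_filter.mp (hrQ i hi)).2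
    set r' : ℕ → α := fun i => if i = 1 then x else r (i - 1) with hr'
    refine ⟨r', fun i hi => ?_, fun i hi i' hi' h => ?_, fun j k hj hjk hk => ?_⟩
    · by_cases h1 : i = 1
      · simpa [hr', h1] using hx
      · simpa [hr', h1] using mem_of_mem_erase (hrP (i - 1) (by omega))
    · simp only [Set.mem_Iic, hr'] at hi hi' h
      split_ifs at h with h1 h1' h1'
      · omega
      · have hx' := hrP (i' - 1) (by omega)
        rw [← h] at hx'
        exact absurd hx' (notMem_erase x P)
      · have hx' := hrP (i - 1) (by omega)
        rw [h] at hx'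
        exact absurd hx' (notMem_erase x P)
      · have := hr_inj (Set.mem_Iic.mpr (by omega : i - 1 ≤ m))
          (Set.mem_Iic.mpr (by omega : i' - 1 ≤ m)) h
        omega
    · rw [hr', image_Icc_one_ite x r hj, ← hr']
      have hk1 : k ≠ 1 := by omega
      by_cases hj1 : j = 1
      · subst hj1
        simp [hr', hk1, hr_col (k - 1) (by omega), hr_col 0 (by omega)]
      · simpa [hr', hj1, hk1] using hr_hom (j - 1) (k - 1) (by omega) (by omega) (by omega)

lemma logb_natCast_lt_natLog_add_one (b n : ℕ) : Real.logb b n < Nat.log b n + 1 := by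
  rw [← Real.natFloor_logb_natCast]
  exact Nat.lt_floor_add_one _

section Protocol

open Equiv

variable {n : ℕ} (B : Fin n → Finset (Fin n) → Bool)

lemma writeAO_mul_revPerm (σ : Perm (Fin n)) (ℓ : Fin n) :
    writeAO B (σ * Fin.revPerm) ℓ = B ℓ ((Ioi (σ.symm ℓ)).image σ) := by
  unfold writeAO
  congr 1
  ext x
  obtain ⟨i, rfl⟩ := σ.surjective x
  simp [Perm.mul_def, Fin.rev_lt_rev]

lemma edgeAO_mul_revPerm [NeZero n] (σ : Perm (Fin n)) (ℓ : Fin n) :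
    edgeAO B (σ * Fin.revPerm) ℓ =
      if ℓ = σ 0 then none else some (writeAO B (σ * Fin.revPerm) ℓ) := by
  unfold edgeAO
  refine if_congr ?_ rfl rfl
  rw [← σ.symm_apply_eq, ← Fin.val_eq_zero_iff]
  simp only [Perm.mul_def, symm_trans_apply, Fin.revPerm_symm, Fin.revPerm_apply, Fin.val_rev]
  have := (σ.symm ℓ).isLt
  omega

lemma card_le_degAO {ι : Type*} {s : Finset ι} {v : Fin n → Bool} (σ : ι → Perm (Fin n))
    (hinj : Set.InjOn (fun i => edgeAO B (σ i)) s)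
    (hcomp : ∀ i ∈ s, Compatible v (edgeAO B (σ i))) : #s ≤ degAO B v := by
  classical
  rw [degAO, ← card_image_of_injOn hinj, ← Set.ncard_coe_finset]
  refine Set.ncard_le_ncard (fun e he => ?_) (Set.toFinite _)
  obtain ⟨i, hi, rfl⟩ := mem_image.mp he
  exact ⟨⟨σ i, rfl⟩, hcomp i hi⟩

lemma image_Ioi_mul_swap_of_le [NeZero n] (ρ : Perm (Fin n)) {k t : Fin n} (hkt : k ≤ t) :
    (Ioi t).image ⇑(ρ * swap k 0) = (Ioi t).image ρ := by
  refine image_congr fun i hi => ?_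
  have hti : t < i := mem_Ioi.mp hi
  rw [Perm.mul_apply, swap_apply_of_ne_of_ne (by grind) (by grind [Fin.zero_le])]

lemma image_Ioi_eq_sdiff_insert [NeZero n] {σ : Perm (Fin n)} {r : ℕ → Fin n} {j : Fin n}
    (h : ∀ i : Fin n, 0 < i → i ≤ j → σ i = r i) :
    (Ioi j).image σ = univ \ insert (σ 0) ((Icc 1 (j : ℕ)).image r) := by
  ext x
  obtain ⟨i, rfl⟩ := σ.surjective x
  simp only [mem_image, mem_Ioi, σ.injective.eq_iff, exists_eq_right, mem_sdiff, mem_univ,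
    mem_insert, mem_Icc, true_and, not_or, not_exists, not_and]
  constructor
  · intro hji
    refine ⟨by grind [Fin.zero_le], fun a ⟨ha, haj⟩ hra => ?_⟩
    have ha' : (⟨a, by omega⟩ : Fin n) = i := by
      rw [← σ.injective.eq_iff, ← hra]
      exact h _ (Fin.lt_def.mpr (by rw [Fin.val_zero, Fin.val_mk]; omega)) (Fin.le_def.mpr haj)
    rw [← ha'] at hji
    exact absurd hji (not_lt.mpr (Fin.le_def.mpr haj))
  · rintro ⟨hi0, hr⟩
    by_contra hij
    have hi : 0 < i := Fin.pos_iff_ne_zero.mpr hi0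
    exact hr i ⟨Fin.lt_def.mp hi, Fin.le_def.mp (not_lt.mp hij)⟩ (h i hi (not_lt.mp hij)).symm

/-- Read `ρ` as the stream `ρ * Fin.revPerm` listed backwards from its last location `ρ 0`, so
that `(Ioi j).image ρ` is the set of locations arriving before `ρ j`. -/
def IsPivotOrder [NeZero n] (ρ : Perm (Fin n)) (M : Fin n) : Prop :=
  ∀ j k : Fin n, 0 < j → j < k → k ≤ M →
    B (ρ j) ((Ioi j).image ⇑(ρ * swap k 0)) = B (ρ j) ((Ioi j).image ρ)

variable {B} in
theorem IsPivotOrder.exists_le_two_mul_degAO [NeZero n] {ρ : Perm (Fin n)} {M : Fin n}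
    (hρ : IsPivotOrder B ρ M) : ∃ v, (M : ℕ) + 2 ≤ 2 * degAO B v := by
  obtain ⟨b, hb⟩ := exists_card_le_two_mul_card_filter_eq (Ioc 0 M)
    fun k => B (ρ 0) ((Ioi k).image ρ)
  set K := (Ioc 0 M).filter fun k => B (ρ 0) ((Ioi k).image ρ) = b
  set v : Fin n → Bool := fun ℓ => if ℓ = ρ 0 then b else writeAO B (ρ * Fin.revPerm) ℓ
  have hv : ∀ t ≠ 0, v (ρ t) = B (ρ t) ((Ioi t).image ρ) := fun t ht => by
    simp [v, ht, writeAO_mul_revPerm]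
  have hdeg : #(insert 0 K) ≤ degAO B v := by
    refine card_le_degAO B (fun k => ρ * swap k 0 * Fin.revPerm) (fun k _ k' _ hkk' => ?_) ?_
    · have h := congrFun hkk' (ρ k)
      simp only [edgeAO_mul_revPerm, Perm.mul_apply, swap_apply_right, if_pos] at h
      split_ifs at h with h'
      exact ρ.injective h'
    · intro k hk ℓ b' hℓ
      rw [edgeAO_mul_revPerm] at hℓ
      split_ifs at hℓ with hℓk
      obtain rfl := Option.some.inj hℓ
      obtain ⟨t, rfl⟩ := (ρ * swap k 0).surjective ℓ
      rw [writeAO_mul_revPerm, symm_apply_apply]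
      rcases mem_insert.mp hk with rfl | hkK
      · rw [swap_self, ← Perm.one_def, mul_one] at hℓk ⊢
        exact hv t (by rintro rfl; exact hℓk rfl)
      obtain ⟨hkM, hkb⟩ := mem_filter.mp hkK
      by_cases htk : t = k
      · subst htk
        rw [image_Ioi_mul_swap_of_le ρ le_rfl, Perm.mul_apply, swap_apply_left]
        simp [v, hkb]
      have ht0 : t ≠ 0 := by rintro rfl; exact hℓk rfl
      rw [Perm.mul_apply, swap_apply_of_ne_of_ne htk ht0, hv t ht0]
      rcases lt_or_gt_of_ne htk with htk | hkt
      · exact (hρ t k (Fin.pos_iff_ne_zero.mpr ht0) htk (mem_Ioc.mp hkM).2).symm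
      · rw [image_Ioi_mul_swap_of_le ρ hkt.le]
  rw [card_insert_of_notMem (by simp [K])] at hdeg
  rw [Fin.card_Ioc, Fin.val_zero, Nat.sub_zero] at hb
  exact ⟨v, by omega⟩

theorem exists_isPivotOrder [NeZero n] (M : Fin n) (hM : 2 ^ ((M : ℕ) + 1) ≤ n + 1) :
    ∃ ρ, IsPivotOrder B ρ M := by
  obtain ⟨r, -, hr_inj, hr_hom⟩ := exists_homogeneous_pivots M univ (by simpa using hM)
    fun x H u => B x (univ \ insert u H)
  obtain ⟨ρ, hρ⟩ := Perm.exists_extending_pair (Fin.castLE M.isLt) (fun i => r i)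
    (Fin.castLE_injective _) fun i i' h => Fin.ext (hr_inj (Set.mem_Iic.mpr (by omega))
      (Set.mem_Iic.mpr (by omega)) h)
  have hρr : ∀ i : Fin n, i ≤ M → ρ i = r i := fun i hi => hρ ⟨i, by omega⟩
  refine ⟨ρ, fun j k hj hjk hkM => ?_⟩
  have hjM : j ≤ M := hjk.le.trans hkM
  rw [image_Ioi_eq_sdiff_insert (r := r) fun i hi hij => ?_,
    image_Ioi_eq_sdiff_insert (r := r) fun i hi hij => hρr i (hij.trans hjM)]
  · simpa [hρr j hjM, hρr k hkM, hρr 0 (Fin.zero_le M)] using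
      hr_hom j k (Fin.lt_def.mp hj) hjk hkM
  · rw [Perm.mul_apply, swap_apply_of_ne_of_ne (hij.trans_lt hjk).ne hi.ne']
    exact hρr i (hij.trans hjM)

end Protocol

/-- every assignment-oblivious protocol for `G_n` has cost at least
`log₂(n)/2`: some vertex of the graph `E(Π)` has degree at least `log₂(n)/2`
(hence at least `⌈log₂(n)/2⌉`). -/
theorem assignment_oblivious_lower_bound {n : ℕ} (hn : 1 ≤ n)
    (B : Fin n → Finset (Fin n) → Bool) :
    ∃ v : Fin n → Bool, Real.logb 2 (n : ℝ) / 2 ≤ (degAO B v : ℝ) := by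
  have : NeZero n := ⟨by omega⟩
  set m := Nat.log 2 (n + 1) - 1
  have hm : m + 1 = Nat.log 2 (n + 1) := by
    have := Nat.log_pos (b := 2) one_lt_two (by omega : 2 ≤ n + 1)
    omega
  have hpow : 2 ^ (m + 1) ≤ n + 1 := hm ▸ Nat.pow_log_le_self 2 (by omega)
  have hmn : m < n := by
    have := Nat.lt_two_pow_self (n := m + 1)
    omega
  obtain ⟨ρ, hρ⟩ := exists_isPivotOrder B ⟨m, hmn⟩ hpow
  obtain ⟨v, hv⟩ := hρ.exists_le_two_mul_degAO
  refine ⟨v, ?_⟩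
  have hlog := logb_natCast_lt_natLog_add_one 2 n
  have hlog_mono : (Nat.log 2 n : ℝ) ≤ m + 1 := by
    exact_mod_cast hm ▸ Nat.log_mono_right (Nat.le_succ n)
  have hdeg : (m : ℝ) + 2 ≤ 2 * degAO B v := by exact_mod_cast hv
  push_cast at hlog
  linarith
end

section
/- For any protocol Π for the game G_n there exists an order-oblivious protocol Π′ with E(Π′) ⊆ E(Π); in particular the cost of Π′ is at most the cost of Π. -/
/-- The partial assignment written by an order-oblivious protocol `B` after `t` steps of
the stream `σ` (the element arriving at time `t` is `σ t`; `B ℓ α` is the bit Alice writes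
at an arriving location `ℓ` when the current partial assignment is `α`). -/
def partOO {n : ℕ} (B : Fin n → (Fin n → Option Bool) → Bool) (σ : Equiv.Perm (Fin n)) :
    ℕ → (Fin n → Option Bool)
  | 0 => fun _ => none
  | t + 1 =>
    if h : t < n then
      Function.update (partOO B σ t) (σ ⟨t, h⟩) (some (B (σ ⟨t, h⟩) (partOO B σ t)))
    else partOO B σ t

/-- The bit written by the order-oblivious protocol `B` at location `ℓ` on stream `σ`. -/
def writeOO {n : ℕ} (B : Fin n → (Fin n → Option Bool) → Bool) (σ : Equiv.Perm (Fin n))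
    (ℓ : Fin n) : Bool :=
  B ℓ (partOO B σ ((σ.symm ℓ : ℕ)))

/-- The hypercube edge `Π_A(σ)`: the array written after the first `n - 1` steps, with a
single unfilled (`none`) coordinate at the last location `σ (n-1)`. -/
def edgeOO {n : ℕ} (B : Fin n → (Fin n → Option Bool) → Bool) (σ : Equiv.Perm (Fin n)) :
    Fin n → Option Bool :=
  partOO B σ (n - 1)

/-- The degree of the vertex `v` in the graph `E(Π)` of the order-oblivious protocol `B`. -/
noncomputable def degOO {n : ℕ} (B : Fin n → (Fin n → Option Bool) → Bool)
    (v : Fin n → Bool) : ℕ :=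
  {e : Fin n → Option Bool | (∃ σ : Equiv.Perm (Fin n), edgeOO B σ = e) ∧
    Compatible v e}.ncard

/-- `β` extends `α` as a partial assignment. -/
def OExtends {n : ℕ} (α β : Fin n → Option Bool) : Prop :=
  ∀ ℓ b, α ℓ = some b → β ℓ = some b

/-- The protocol `B` is monotone: each map `A_ℓ` is monotone w.r.t. the extension order. -/
def MonotoneOO {n : ℕ} (B : Fin n → (Fin n → Option Bool) → Bool) : Prop :=
  ∀ (ℓ : Fin n) (α β : Fin n → Option Bool), OExtends α β → B ℓ α = true → B ℓ β = true

/-- The bit written at location `ℓ` by a general protocol for `G_n`, specified by a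
function `A` of the stream prefix `σ 0, …, σ t` ending with the arriving location. -/
def writeGen {n : ℕ} (A : List (Fin n) → Bool) (σ : Equiv.Perm (Fin n)) (ℓ : Fin n) :
    Bool :=
  A (((List.finRange n).map σ).take ((σ.symm ℓ : ℕ) + 1))

/-- The hypercube edge `Π_A(σ)` of a general protocol. -/
def edgeGen {n : ℕ} (A : List (Fin n) → Bool) (σ : Equiv.Perm (Fin n)) :
    Fin n → Option Bool :=
  fun ℓ => if (σ.symm ℓ : ℕ) = n - 1 then none else some (writeGen A σ ℓ)

/-- The degree of the vertex `v` in the graph `E(Π)` of the general protocol `A`. -/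
noncomputable def degGen {n : ℕ} (A : List (Fin n) → Bool) (v : Fin n → Bool) : ℕ :=
  {e : Fin n → Option Bool | (∃ σ : Equiv.Perm (Fin n), edgeGen A σ = e) ∧
    Compatible v e}.ncard

/-!
The order-oblivious protocol writes at `ℓ` the bit that `A` would write if the filled
locations had arrived in some order on which `A` produces exactly the current array, with `ℓ`
arriving next. By induction on the stream, the array it has written after `t` steps is the array
`A` writes on some reordering of the first `t` arrivals; after `n - 1` steps, this reordering
followed by the last location is a stream on which `A` produces the same edge.
-/

open List Function

section RunAssignment

variable {ι β : Type*} [DecidableEq ι] (A : List ι → β)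

def runAssignment (L : List ι) : ι → Option β :=
  fun ℓ => if ℓ ∈ L then some (A (L.take (L.idxOf ℓ + 1))) else none

theorem isSome_runAssignment_iff {L : List ι} {ℓ : ι} :
    (runAssignment A L ℓ).isSome ↔ ℓ ∈ L := by
  unfold runAssignment
  split_ifs <;> simp [*]

theorem runAssignment_append_singleton {L : List ι} {x : ι} (hx : x ∉ L) :
    runAssignment A (L ++ [x]) = update (runAssignment A L) x (some (A (L ++ [x]))) := by
  funext ℓ
  rcases eq_or_ne ℓ x with rfl | hℓx
  · simp [runAssignment, idxOf_append_of_notMem hx, take_of_length_le]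
  · by_cases hℓ : ℓ ∈ L
    · simp [runAssignment, hℓx, hℓ, idxOf_append_of_mem hℓ,
        take_append_of_le_length (idxOf_lt_length_iff.2 hℓ)]
    · simp [runAssignment, hℓx, hℓ]

open Classical in
noncomputable def runOrder (α : ι → Option β) : List ι :=
  if h : ∃ L : List ι, L.Nodup ∧ runAssignment A L = α then h.choose else []

theorem runOrder_spec {L : List ι} (hL : L.Nodup) :
    (runOrder A (runAssignment A L)).Nodup ∧
      runAssignment A (runOrder A (runAssignment A L)) = runAssignment A L := by
  have h : ∃ L' : List ι, L'.Nodup ∧ runAssignment A L' = runAssignment A L := ⟨L, hL, rfl⟩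
  rw [runOrder, dif_pos h]
  exact h.choose_spec

theorem runOrder_perm {L : List ι} (hL : L.Nodup) : runOrder A (runAssignment A L) ~ L := by
  obtain ⟨hnodup, hrun⟩ := runOrder_spec A hL
  refine (perm_ext_iff_of_nodup hnodup hL).2 fun ℓ => ?_
  rw [← isSome_runAssignment_iff A, hrun, isSome_runAssignment_iff]

noncomputable def obliviousOf : ι → (ι → Option β) → β :=
  fun ℓ α => A (runOrder A α ++ [ℓ])

theorem exists_perm_runAssignment_eq_update {L : List ι} {x : ι} (hL : L.Nodup) (hx : x ∉ L) :
    ∃ L', L' ~ L ++ [x] ∧ runAssignment A L' =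
      update (runAssignment A L) x (some (obliviousOf A x (runAssignment A L))) := by
  have hperm := runOrder_perm A hL
  refine ⟨runOrder A (runAssignment A L) ++ [x], hperm.append_right _, ?_⟩
  rw [runAssignment_append_singleton A (hx ∘ hperm.mem_iff.1), (runOrder_spec A hL).2]
  rfl

end RunAssignment

theorem exists_perm_runAssignment_eq_partOO {n : ℕ} (A : List (Fin n) → Bool)
    (σ : Equiv.Perm (Fin n)) (t : ℕ) :
    ∃ L, L ~ ((finRange n).map σ).take t ∧ runAssignment A L = partOO (obliviousOf A) σ t := by
  induction t with
  | zero => exact ⟨[], by simp, funext fun _ => by simp [runAssignment, partOO]⟩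
  | succ t ih =>
    obtain ⟨L, hperm, hrun⟩ := ih
    rw [partOO]
    split_ifs with ht
    · have htake : ((finRange n).map σ).take (t + 1) =
          ((finRange n).map σ).take t ++ [σ ⟨t, ht⟩] := by
        simp [take_add_one, ht]
      have hnodup : (((finRange n).map σ).take t ++ [σ ⟨t, ht⟩]).Nodup :=
        htake ▸ ((nodup_finRange n).map σ.injective).take
      rw [← concat_eq_append, nodup_concat] at hnodup
      obtain ⟨L', hL', hrun'⟩ := exists_perm_runAssignment_eq_update A
        (hperm.nodup_iff.2 hnodup.2) (hnodup.1 ∘ hperm.mem_iff.1)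
      exact ⟨L', htake ▸ hL'.trans (hperm.append_right _), hrun ▸ hrun'⟩
    · have hlen : ((finRange n).map σ).length ≤ t := by
        rw [length_map, length_finRange]; omega
      rw [take_of_length_le (hlen.trans t.le_succ)]
      rw [take_of_length_le hlen] at hperm
      exact ⟨L, hperm, hrun⟩

theorem idxOf_map_finRange {n : ℕ} (τ : Equiv.Perm (Fin n)) (ℓ : Fin n) :
    ((finRange n).map τ).idxOf ℓ = τ.symm ℓ := by
  simpa using ((nodup_finRange n).map τ.injective).idxOf_getElem (τ.symm ℓ) (by simp)

theorem edgeGen_eq_runAssignment {n : ℕ} (A : List (Fin n) → Bool) (τ : Equiv.Perm (Fin n)) :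
    edgeGen A τ = runAssignment A (((finRange n).map τ).take (n - 1)) := by
  funext ℓ
  set M := (finRange n).map τ
  have hℓM : ℓ ∈ M := mem_map.2 ⟨τ.symm ℓ, mem_finRange _, τ.apply_symm_apply ℓ⟩
  have hidx : M.idxOf ℓ = τ.symm ℓ := idxOf_map_finRange τ ℓ
  have hmem := mem_take_iff_idxOf_lt (n := n - 1) hℓM
  rw [hidx] at hmem
  by_cases hlast : (τ.symm ℓ : ℕ) = n - 1
  · simp [edgeGen, runAssignment, hlast, hmem]
  · have hlt : (τ.symm ℓ : ℕ) < n - 1 := by omega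
    have hidx' : (M.take (n - 1)).idxOf ℓ = τ.symm ℓ := by
      rw [← hidx, ← idxOf_append_of_mem (hmem.2 hlt), take_append_drop]
    simp [edgeGen, writeGen, runAssignment, hlast, hmem.2 hlt, hidx', take_take,
      Nat.min_eq_left (Nat.succ_le_of_lt hlt), M]

theorem exists_map_finRange_eq_of_perm {n : ℕ} {L : List (Fin n)} {σ : Equiv.Perm (Fin n)}
    (h : L ~ (finRange n).map σ) : ∃ τ : Equiv.Perm (Fin n), (finRange n).map τ = L := by
  have hlen : L.length = n := by simpa using h.length_eq
  refine ⟨(finCongr hlen.symm).trans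
    (Nodup.getEquivOfForallMemList L (h.nodup_iff.2 ((nodup_finRange n).map σ.injective))
      fun x => h.mem_iff.2 (mem_map.2 ⟨σ.symm x, mem_finRange _, σ.apply_symm_apply x⟩)), ?_⟩
  apply ext_getElem (by simp [hlen])
  intro i _ _
  simp

theorem exists_edgeGen_eq_edgeOO {n : ℕ} (A : List (Fin n) → Bool) (σ : Equiv.Perm (Fin n)) :
    ∃ τ : Equiv.Perm (Fin n), edgeGen A τ = edgeOO (obliviousOf A) σ := by
  obtain ⟨L, hperm, hrun⟩ := exists_perm_runAssignment_eq_partOO A σ (n - 1)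
  set M := (finRange n).map σ
  have hlen : L.length = n - 1 := by simp [hperm.length_eq, M]
  have hfull : L ++ M.drop (n - 1) ~ M := by
    simpa only [take_append_drop] using hperm.append_right (M.drop (n - 1))
  obtain ⟨τ, hτ⟩ := exists_map_finRange_eq_of_perm hfull
  refine ⟨τ, ?_⟩
  rw [edgeGen_eq_runAssignment, hτ, take_left' hlen, hrun, edgeOO]

/-- for any protocol `A` for `G_n` there is an order-oblivious protocol `B`
with `E(Π') ⊆ E(Π)`; in particular every vertex degree (hence the cost) of `B` is at most
that of `A`. -/
theorem exists_order_oblivious_protocol {n : ℕ} (A : List (Fin n) → Bool) :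
    ∃ B : Fin n → (Fin n → Option Bool) → Bool,
      {e : Fin n → Option Bool | ∃ σ : Equiv.Perm (Fin n), edgeOO B σ = e} ⊆
        {e : Fin n → Option Bool | ∃ σ : Equiv.Perm (Fin n), edgeGen A σ = e} ∧
      ∀ v : Fin n → Bool, degOO B v ≤ degGen A v := by
  have hsub : {e | ∃ σ, edgeOO (obliviousOf A) σ = e} ⊆ {e | ∃ σ, edgeGen A σ = e} := by
    rintro e ⟨σ, rfl⟩
    exact exists_edgeGen_eq_edgeOO A σ
  refine ⟨obliviousOf A, hsub, fun v => Set.ncard_le_ncard ?_ (Set.toFinite _)⟩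
  exact fun e he => ⟨hsub he.1, he.2⟩
end

section
/- The AND-OR protocol for G_n has cost at most ⌈√n⌉: if [n] is partitioned into ⌈√n⌉ blocks of size at most ⌈√n⌉ and Alice writes 1 at an arriving location iff it is the last of its block to arrive (with the final bit b written at the last location), then in the completed array either there is an all-zero block (which then contains σ_n) or the set of locations holding 1 has size ⌈√n⌉ and contains σ_n. -/
/-! Within a block only the location arriving last is marked, so the marked locations inject into
the `k` blocks. The location `σ_n` arrives last overall, hence last in its block: if `b = 1` it is
marked like every other block-last location, and if `b = 0` its whole block is zero. -/

open Finset Function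

section LastOfBlock

variable {ι β γ : Type*} [LinearOrder γ] (P : ι → β) (τ : ι → γ)

/-- `P ℓ` is the block of location `ℓ` and `τ ℓ` its arrival time. -/
def IsLastOfBlock (ℓ : ι) : Prop := ∀ m, P m = P ℓ → τ m ≤ τ ℓ

variable {P τ}

theorem IsLastOfBlock.eq (hτ : Injective τ) {ℓ m : ι} (hℓ : IsLastOfBlock P τ ℓ)
    (hm : IsLastOfBlock P τ m) (h : P ℓ = P m) : ℓ = m :=
  hτ (le_antisymm (hm ℓ h) (hℓ m h.symm))

theorem Finset.card_le_card_of_forall_isLastOfBlock [Fintype β] (hτ : Injective τ) {s : Finset ι}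
    (hs : ∀ ℓ ∈ s, IsLastOfBlock P τ ℓ) : #s ≤ Fintype.card β := by
  simpa using card_le_card_of_injOn P (fun _ _ => mem_univ _)
    fun ℓ hℓ m hm h => (hs ℓ hℓ).eq hτ (hs m hm) h

end LastOfBlock

/-- the AND-OR protocol has cost at most `⌈√n⌉`.  Given a partition of the
locations into `k = ⌈√n⌉` blocks (`P ℓ` is the block of `ℓ`) each of size at most `k`, on
stream `σ` Alice writes `1` at a location iff it is the last of its block to arrive (and
writes the given bit `b` at the last location `σ (n-1)`).  In the completed array, either
some block is all-zero and contains the last location, or the set of locations holding `1`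
has size at most `k` and contains the last location. -/
theorem and_or_protocol_cost (n : ℕ) (hn : 1 ≤ n) (k : ℕ) (P : Fin n → Fin k)
    (σ : Equiv.Perm (Fin n)) (b : Bool) :
    ∀ (last : Fin n), last = σ ⟨n - 1, by omega⟩ →
    ∀ (v : Fin n → Bool), (v = fun ℓ => if ℓ = last then b
        else decide (∀ m : Fin n, P m = P ℓ → σ.symm m ≤ σ.symm ℓ)) →
      ((∃ j : Fin k, P last = j ∧ ∀ ℓ : Fin n, P ℓ = j → v ℓ = false) ∨
        ((Finset.univ.filter fun ℓ : Fin n => v ℓ = true).card ≤ k ∧ v last = true)) := by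
  intro last hlast v hv
  have last_isLast : IsLastOfBlock P σ.symm last := by
    intro m _
    simp only [hlast, Equiv.symm_apply_apply, Fin.le_def]
    omega
  have marked_isLast (ℓ : Fin n) (hℓ : v ℓ = true) : IsLastOfBlock P σ.symm ℓ := by
    by_cases h : ℓ = last
    · exact h ▸ last_isLast
    · simp only [hv, if_neg h, decide_eq_true_eq] at hℓ
      exact hℓ
  cases b
  · refine .inl ⟨P last, rfl, fun ℓ hℓ => ?_⟩
    refine Bool.eq_false_iff.2 fun hmarked => ?_
    have hne : ℓ ≠ last := by rintro rfl; simp [hv] at hmarked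
    exact hne ((marked_isLast ℓ hmarked).eq σ.symm.injective last_isLast hℓ)
  · exact .inr ⟨(card_le_card_of_forall_isLastOfBlock σ.symm.injective fun ℓ hℓ =>
      marked_isLast ℓ (mem_filter.1 hℓ).2).trans_eq (Fintype.card_fin k), by simp [hv]⟩
end

section
/- For n sufficiently large and n ≥ k² ≥ 0.8·n, there exists an (n, k²)-proper code in which any two distinct codewords are at Hamming distance at least 2k+1. -/
/-!
Greedy choice (Gilbert–Varshamov): pick the codewords one at a time, `x_S` among the
`2 ^ k²` words supported in `S`, avoiding the radius-`2k` Hamming balls around the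
codewords already chosen. Each ball has at most `(n + 1) ^ (2k)` points and there are
`C(n, k²)` codewords, so the choice is possible as long as
`C(n, k²) (n + 1) ^ (2k) < 2 ^ k²`. With `m = n - k² ≤ n / 5`, the bound
`C(n, m) ^ 5 ≤ (5e) ^ n < 15 ^ n`, `n + 1 ≤ 2k²` and `2 ^ (5k²) ≥ 16 ^ n` reduce this,
after taking fifth powers, to `15 ^ k (2k²) ^ 10 < 16 ^ k`, true for large `k`.
-/

open Finset Filter Real

section Greedy

variable {ι α : Type*} [Fintype ι]

theorem exists_pairwise_not_rel_of_card_mul_lt (C : ι → Finset α) (R : α → α → Prop)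
    [DecidableRel R] (hR : ∀ v w, R v w → R w v) (M : ℕ) (hM : ∀ i w, #{v ∈ C i | R v w} ≤ M)
    (hC : ∀ i, Fintype.card ι * M < #(C i)) :
    ∃ x : ι → α, (∀ i, x i ∈ C i) ∧ Pairwise fun i j => ¬R (x i) (x j) := by
  classical
  suffices h : ∀ A : Finset ι, ∃ x : ι → α, (∀ i, x i ∈ C i) ∧
      (A : Set ι).Pairwise fun i j => ¬R (x i) (x j) by
    obtain ⟨x, hxC, hx⟩ := h univ
    exact ⟨x, hxC, fun i j hij => hx (mem_univ i) (mem_univ j) hij⟩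
  intro A
  induction A using Finset.induction_on with
  | empty =>
    have hne i : (C i).Nonempty := card_pos.mp (pos_of_gt (hC i))
    exact ⟨fun i => (hne i).choose, fun i => (hne i).choose_spec, by simp⟩
  | @insert a A haA ih =>
    obtain ⟨x, hxC, hx⟩ := ih
    have hbad : #(A.biUnion fun j => {v ∈ C a | R v (x j)}) < #(C a) :=
      calc _ ≤ #A * M := card_biUnion_le_card_mul _ _ _ fun j _ => hM a (x j)
        _ ≤ Fintype.card ι * M := Nat.mul_le_mul_right _ (card_le_univ A)
        _ < #(C a) := hC a
    obtain ⟨v, hvC, hvbad⟩ := exists_mem_notMem_of_card_lt_card hbad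
    have hv : ∀ j ∈ A, ¬R v (x j) := fun j hj hvj =>
      hvbad (mem_biUnion.mpr ⟨j, hj, mem_filter.mpr ⟨hvC, hvj⟩⟩)
    have hxa : ∀ j ∈ A, j ≠ a := fun j hj hja => haA (hja ▸ hj)
    refine ⟨Function.update x a v, fun i => ?_, ?_⟩
    · rcases eq_or_ne i a with rfl | hia
      · simpa using hvC
      · simpa [hia] using hxC i
    · rw [coe_insert]
      refine Set.Pairwise.insert_of_notMem haA (fun i hi j hj hij => ?_) fun j hj => ?_
      · simpa [hxa i hi, hxa j hj] using hx hi hj hij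
      · simp only [Function.update_self, Function.update_of_ne (hxa j hj)]
        exact ⟨hv j hj, fun h => hv j hj (hR _ _ h)⟩

end Greedy

section BooleanWords

variable {κ : Type*} [Fintype κ]

theorem card_finset_card_le_le (r : ℕ) :
    #{s : Finset κ | #s ≤ r} ≤ (Fintype.card κ + 1) ^ r := by
  classical
  calc #{s : Finset κ | #s ≤ r}
      ≤ #((range (r + 1)).biUnion fun i => powersetCard i (univ : Finset κ)) :=
        card_le_card fun s hs => by
          simp only [mem_filter, mem_univ, true_and] at hs
          simpa [Nat.lt_succ_iff] using hs
    _ ≤ ∑ i ∈ range (r + 1), (Fintype.card κ).choose i := by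
        refine card_biUnion_le.trans (sum_le_sum fun i _ => ?_)
        rw [card_powersetCard, card_univ]
    _ ≤ ∑ i ∈ range (r + 1), Fintype.card κ ^ i * 1 ^ (r - i) * r.choose i :=
        sum_le_sum fun i hi => by
          rw [one_pow, mul_one]
          exact (Nat.choose_le_pow _ _).trans
            (Nat.le_mul_of_pos_right _ (Nat.choose_pos (Nat.lt_succ_iff.mp (mem_range.mp hi))))
    _ = (Fintype.card κ + 1) ^ r := (add_pow _ _ _).symm

variable [DecidableEq κ]

theorem card_hammingDist_le_le (w : κ → Bool) (r : ℕ) :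
    #{v : κ → Bool | hammingDist v w ≤ r} ≤ (Fintype.card κ + 1) ^ r := by
  refine (card_le_card_of_injOn (t := {s : Finset κ | #s ≤ r})
    (fun v => ({i | v i ≠ w i} : Finset κ)) ?_ ?_).trans (card_finset_card_le_le r)
  · intro v hv
    simpa [hammingDist] using hv
  · intro v _ v' _ h
    funext i
    have hi : v i ≠ w i ↔ v' i ≠ w i := by simpa using congrArg (i ∈ ·) h
    revert hi
    cases v i <;> cases v' i <;> cases w i <;> decide

def supportedWords (S : Finset κ) : Finset (κ → Bool) := {v | ∀ i, v i = true → i ∈ S}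

theorem mem_supportedWords {S : Finset κ} {v : κ → Bool} :
    v ∈ supportedWords S ↔ ∀ i, v i = true → i ∈ S := by
  simp [supportedWords]

theorem two_pow_card_le_card_supportedWords (S : Finset κ) : 2 ^ #S ≤ #(supportedWords S) := by
  rw [← card_powerset]
  refine card_le_card_of_injOn (fun s i => decide (i ∈ s)) (fun s hs => ?_) fun s _ t _ h => ?_
  · simpa [mem_supportedWords] using fun i hi => mem_powerset.mp hs hi
  · ext i
    simpa using congrFun h i

end BooleanWords

theorem pow_le_pow_mul_exp_sub (N : ℕ) {y : ℝ} (hy : 0 ≤ y) :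
    y ^ N ≤ (N : ℝ) ^ N * exp (y - N) := by
  rcases N.eq_zero_or_pos with rfl | hN
  · simpa using one_le_exp hy
  have hN' : (0 : ℝ) < N := by exact_mod_cast hN
  have ht : y / N ≤ exp (y / N - 1) := by linarith [add_one_le_exp (y / N - 1)]
  calc y ^ N = (N : ℝ) ^ N * (y / N) ^ N := by
        rw [div_pow, mul_div_cancel₀ _ (pow_pos hN' N).ne']
    _ ≤ (N : ℝ) ^ N * exp (y / N - 1) ^ N := by gcongr
    _ = (N : ℝ) ^ N * exp (y - N) := by
        rw [← exp_nat_mul]; congr 2; field_simp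

theorem choose_mul_pow_le (n m : ℕ) : (n.choose m : ℝ) * m ^ m ≤ (exp 1 * n) ^ m :=
  calc (n.choose m : ℝ) * m ^ m ≤ (n : ℝ) ^ m / m.factorial * m ^ m := by
        gcongr; exact Nat.choose_le_pow_div m n
    _ = (n : ℝ) ^ m * ((m : ℝ) ^ m / m.factorial) := by ring
    _ ≤ (n : ℝ) ^ m * exp m := by gcongr; exact pow_div_factorial_le_exp _ (Nat.cast_nonneg m) m
    _ = (exp 1 * n) ^ m := by rw [mul_pow, ← exp_nat_mul, mul_one, mul_comm]

theorem choose_pow_le_mul_exp_one_pow {n m c : ℕ} (hc : 0 < c) (h : c * m ≤ n) :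
    (n.choose m : ℝ) ^ c ≤ (c * exp 1) ^ n := by
  have hc1 : (1 : ℝ) ≤ c := by exact_mod_cast hc
  rcases m.eq_zero_or_pos with rfl | hm
  · simpa using one_le_pow₀ (one_le_mul_of_one_le_of_one_le hc1 (one_le_exp zero_le_one))
  have hcm : (0 : ℝ) < (m : ℝ) ^ (c * m) := by positivity
  have key : (n.choose m : ℝ) ^ c * (m : ℝ) ^ (c * m) ≤ (c : ℝ) ^ (c * m) * exp n * m ^ (c * m) :=
    calc (n.choose m : ℝ) ^ c * (m : ℝ) ^ (c * m) = ((n.choose m : ℝ) * m ^ m) ^ c := by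
          rw [mul_pow, ← pow_mul, mul_comm m c]
      _ ≤ ((exp 1 * n) ^ m) ^ c := by gcongr; exact choose_mul_pow_le n m
      _ = exp (c * m : ℕ) * (n : ℝ) ^ (c * m) := by
          rw [← pow_mul, mul_pow, ← exp_nat_mul, mul_one, mul_comm m c]
      _ ≤ exp (c * m : ℕ) * (((c * m : ℕ) : ℝ) ^ (c * m) * exp (n - (c * m : ℕ))) := by
          gcongr; exact pow_le_pow_mul_exp_sub _ (Nat.cast_nonneg n)
      _ = (c : ℝ) ^ (c * m) * exp n * m ^ (c * m) := by
          have hexp : exp (c * m : ℕ) * exp (n - (c * m : ℕ)) = exp n := by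
            rw [← exp_add, add_sub_cancel]
          rw [← hexp, Nat.cast_mul, mul_pow]; ring
  calc (n.choose m : ℝ) ^ c ≤ (c : ℝ) ^ (c * m) * exp n := le_of_mul_le_mul_right key hcm
    _ ≤ (c : ℝ) ^ n * exp n := by gcongr
    _ = (c * exp 1) ^ n := by rw [mul_pow, ← exp_nat_mul, mul_one]

theorem choose_pow_five_le {n m : ℕ} (h : 5 * m ≤ n) : n.choose m ^ 5 ≤ 15 ^ n := by
  have h15 : (5 * exp 1) ^ n ≤ (15 : ℝ) ^ n :=
    pow_le_pow_left₀ (by positivity) (by linarith [exp_one_lt_three]) n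
  have h' : ((n.choose m ^ 5 : ℕ) : ℝ) ≤ ((15 ^ n : ℕ) : ℝ) := by
    push_cast
    exact_mod_cast (choose_pow_le_mul_exp_one_pow (c := 5) (by norm_num) h).trans h15
  exact_mod_cast h'

theorem eventually_fifteen_pow_mul_lt_sixteen_pow :
    ∀ᶠ k : ℕ in atTop, 15 ^ k * (2 * k ^ 2) ^ 10 < 16 ^ k := by
  filter_upwards [(tendsto_pow_const_div_const_pow_of_one_lt 20
    (show (1 : ℝ) < 16 / 15 by norm_num)).eventually
      (gt_mem_nhds (show (0 : ℝ) < 1 / 1024 by norm_num))] with k hk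
  rw [div_pow, div_div_eq_mul_div, div_lt_iff₀ (by positivity)] at hk
  have : (15 : ℝ) ^ k * (2 * k ^ 2) ^ 10 < 16 ^ k := by linarith
  exact_mod_cast this

theorem exists_choose_mul_pow_lt_two_pow : ∃ N, ∀ n, N ≤ n → ∀ k, k ^ 2 ≤ n → 4 * n ≤ 5 * k ^ 2 →
    n.choose (k ^ 2) * (n + 1) ^ (2 * k) < 2 ^ (k ^ 2) := by
  obtain ⟨K, hK⟩ := eventually_atTop.mp
    (eventually_fifteen_pow_mul_lt_sixteen_pow.and (eventually_ge_atTop 2))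
  refine ⟨2 * K ^ 2, fun n hn k hk h45 => ?_⟩
  obtain ⟨hk16, hk2⟩ := hK k (by nlinarith)
  have hC : n.choose (k ^ 2) ^ 5 ≤ 15 ^ n := by
    rw [← Nat.choose_symm hk]
    exact choose_pow_five_le (by omega)
  have hn1 : n + 1 ≤ 2 * k ^ 2 := by nlinarith
  have hk0 : k ≠ 0 := by omega
  rw [← Nat.pow_lt_pow_iff_left (by norm_num : 5 ≠ 0)]
  calc (n.choose (k ^ 2) * (n + 1) ^ (2 * k)) ^ 5
      = n.choose (k ^ 2) ^ 5 * ((n + 1) ^ 10) ^ k := by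
        rw [mul_pow, ← pow_mul, ← pow_mul, show 2 * k * 5 = 10 * k by ring]
    _ ≤ 15 ^ n * ((2 * k ^ 2) ^ 10) ^ k := by gcongr
    _ = 15 ^ (n - k ^ 2) * (15 ^ k * (2 * k ^ 2) ^ 10) ^ k := by
        rw [mul_pow (15 ^ k), ← pow_mul 15 k k, ← mul_assoc, ← pow_add, ← sq, Nat.sub_add_cancel hk]
    _ < 15 ^ (n - k ^ 2) * (16 ^ k) ^ k := by gcongr
    _ ≤ 16 ^ (n - k ^ 2) * (16 ^ k) ^ k := by gcongr; norm_num
    _ = 2 ^ (4 * n) := by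
        rw [← pow_mul, ← sq, ← pow_add, Nat.sub_add_cancel hk, pow_mul]; norm_num
    _ ≤ 2 ^ (5 * k ^ 2) := Nat.pow_le_pow_right (by norm_num) h45
    _ = (2 ^ k ^ 2) ^ 5 := by rw [← pow_mul, mul_comm]

/-- for `n` sufficiently large and `n ≥ k² ≥ 0.8·n`, there is an
`(n, k²)`-proper code (a family `x_S`, indexed by the sets `S` of size `k²`, with the
support of `x_S` contained in `S`) whose codewords are pairwise at Hamming distance at
least `2k + 1`. -/
theorem exists_proper_code :
    ∃ N : ℕ, ∀ n : ℕ, N ≤ n → ∀ k : ℕ, k ^ 2 ≤ n → (0.8 : ℝ) * (n : ℝ) ≤ ((k ^ 2 : ℕ) : ℝ) →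
      ∃ x : {S : Finset (Fin n) // S.card = k ^ 2} → (Fin n → Bool),
        (∀ S, ∀ ℓ : Fin n, x S ℓ = true → ℓ ∈ S.1) ∧
        (∀ S T, S ≠ T →
          2 * k + 1 ≤ (Finset.univ.filter fun ℓ : Fin n => x S ℓ ≠ x T ℓ).card) := by
  obtain ⟨N, hN⟩ := exists_choose_mul_pow_lt_two_pow
  refine ⟨N, fun n hn k hk h08 => ?_⟩
  have h45 : 4 * n ≤ 5 * k ^ 2 := by
    have : (4 * n : ℝ) ≤ 5 * (k ^ 2 : ℕ) := by linarith
    exact_mod_cast this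
  obtain ⟨x, hsupp, hfar⟩ := exists_pairwise_not_rel_of_card_mul_lt
    (fun S : {S : Finset (Fin n) // S.card = k ^ 2} => supportedWords S.1)
    (fun v w => hammingDist v w ≤ 2 * k) (fun v w h => hammingDist_comm v w ▸ h)
    ((n + 1) ^ (2 * k))
    (fun S w => (card_le_card (filter_subset_filter _ (subset_univ _))).trans
      (by simpa using card_hammingDist_le_le w (2 * k)))
    (fun S => by
      rw [Fintype.card_finset_len, Fintype.card_fin]
      refine (hN n hn k hk h45).trans_le ?_
      simpa only [S.2] using two_pow_card_le_card_supportedWords S.1)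
  exact ⟨x, fun S => mem_supportedWords.mp (hsupp S), fun S T hST => not_le.mp (hfar hST)⟩
end

section
/- For the lexicographically minimal word w(σ) produced by a monotone order-oblivious protocol (over all permutations σ, where w(σ)_i is the bit written at location σ_i), w(σ) consists of a block of 0's followed by a block of 1's followed by a single *. -/
/-- `w(σ)`: the bits written by the protocol, listed in arrival order (the first `n - 1`
entries; the final entry of `w(σ)` is the `*`, omitted here). -/
def wListOO {n : ℕ} (B : Fin n → (Fin n → Option Bool) → Bool) (σ : Equiv.Perm (Fin n)) :
    List Bool :=
  (((List.finRange n).map fun t => writeOO B σ (σ t))).take (n - 1)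

/-! If `σ` wrote `1` at time `t` and `0` at time `t + 1`, swap these two arrivals. The new stream
agrees with `σ` before time `t`, so it writes the same first `t` bits, and at time `t` it presents
the location `σ (t + 1)` with the assignment `Π_σ(t)`, which `Π_σ(t + 1)` extends. Monotonicity
turns the `0` written there under `σ` into a `0` now, so the new word is lexicographically smaller.
Hence in a lexicographically minimal word every `1` is followed by a `1`. -/

theorem exists_iff_le_of_forall_succ {p : ℕ → Prop} {N : ℕ}
    (h : ∀ k, k + 1 < N → p k → p (k + 1)) : ∃ m, ∀ k < N, (p k ↔ m ≤ k) := by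
  classical
  have hmono : ∀ k j, k ≤ j → j < N → p k → p j := by
    intro k j hkj
    induction j, hkj using Nat.le_induction with
    | base => exact fun _ hp => hp
    | succ j _ ih => exact fun hj hp => h j hj (ih (by omega) hp)
  have hex : ∃ m, m = N ∨ (m < N ∧ p m) := ⟨N, .inl rfl⟩
  refine ⟨Nat.find hex, fun k hk => ⟨fun hp => Nat.find_min' hex (.inr ⟨hk, hp⟩), fun hle => ?_⟩⟩
  rcases Nat.find_spec hex with hN | ⟨_, hp⟩
  · omega
  · exact hmono _ _ hle hk hp

section Protocol

variable {n : ℕ} (B : Fin n → (Fin n → Option Bool) → Bool) (σ : Equiv.Perm (Fin n))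

theorem partOO_apply_eq_none {t : ℕ} {u : Fin n} (h : t ≤ u) : partOO B σ t (σ u) = none := by
  induction t with
  | zero => rfl
  | succ t ih =>
    rw [partOO, dif_pos (by omega),
      Function.update_of_ne (σ.injective.ne (Fin.ne_of_val_ne (by simp; omega)))]
    exact ih (by omega)

theorem oExtends_partOO_succ (t : ℕ) : OExtends (partOO B σ t) (partOO B σ (t + 1)) := by
  intro ℓ b hb
  rw [partOO]
  split_ifs with ht
  · have hℓ : ℓ ≠ σ ⟨t, ht⟩ := by
      rintro rfl
      rw [partOO_apply_eq_none B σ (u := ⟨t, ht⟩) le_rfl] at hb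
      cases hb
    rwa [Function.update_of_ne hℓ]
  · exact hb

theorem partOO_congr {σ τ : Equiv.Perm (Fin n)} {s : ℕ}
    (h : ∀ u : Fin n, (u : ℕ) < s → σ u = τ u) : partOO B σ s = partOO B τ s := by
  induction s with
  | zero => rfl
  | succ s ih =>
    rw [partOO, partOO, ih fun u hu => h u (by omega)]
    split_ifs with hs
    · rw [h ⟨s, hs⟩ (by simp)]
    · rfl

theorem writeOO_apply (t : Fin n) : writeOO B σ (σ t) = B (σ t) (partOO B σ t) := by
  simp [writeOO]

theorem length_wListOO : (wListOO B σ).length = n - 1 := by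
  simp [wListOO]

theorem getElem_wListOO (i : ℕ) (hi : i < (wListOO B σ).length) :
    (wListOO B σ)[i] = writeOO B σ (σ ⟨i, by rw [length_wListOO] at hi; omega⟩) := by
  simp [wListOO]

theorem wListOO_mul_swap_lt (hB : MonotoneOO B) {t u : Fin n} (htu : (u : ℕ) = t + 1)
    (ht : writeOO B σ (σ t) = true) (hu : writeOO B σ (σ u) = false) :
    wListOO B (σ * Equiv.swap t u) < wListOO B σ := by
  set τ := σ * Equiv.swap t u
  have hτ : ∀ v : Fin n, (v : ℕ) < t → τ v = σ v := fun v hv =>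
    congrArg σ (Equiv.swap_apply_of_ne_of_ne (Fin.ne_of_lt hv) (Fin.ne_of_val_ne (by omega)))
  have hpart : partOO B τ t = partOO B σ t := partOO_congr B hτ
  have hτt : τ t = σ u := by simp [τ]
  have hfalse : B (σ u) (partOO B σ t) = false := by
    rw [writeOO_apply, htu] at hu
    exact Bool.eq_false_iff.mpr fun h => by
      simp [hB _ _ _ (oExtends_partOO_succ B σ t) h] at hu
  have ht' : (t : ℕ) < n - 1 := by omega
  refine List.lt_iff_exists.mpr (Or.inr ⟨t, by rwa [length_wListOO], by rwa [length_wListOO],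
    fun j hj => ?_, ?_⟩)
  · rw [getElem_wListOO, getElem_wListOO, writeOO_apply, writeOO_apply, hτ _ hj,
      partOO_congr B fun v hv => hτ v (by simp at hv ⊢; omega)]
  · rw [getElem_wListOO, getElem_wListOO, Fin.eta, ht, writeOO_apply, hτt, hpart, hfalse]
    exact Bool.false_lt_true

end Protocol

theorem lex_minimal_word_structure_general {n : ℕ}
    (B : Fin n → (Fin n → Option Bool) → Bool) (hB : MonotoneOO B)
    (σ : Equiv.Perm (Fin n))
    (hσ : ∀ τ : Equiv.Perm (Fin n), ¬ List.Lex (· < ·) (wListOO B τ) (wListOO B σ)) :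
    ∃ m : ℕ, ∀ t : Fin n, (t : ℕ) < n - 1 →
      (writeOO B σ (σ t) = true ↔ m ≤ (t : ℕ)) := by
  obtain ⟨m, hm⟩ := exists_iff_le_of_forall_succ (N := n - 1)
    (p := fun k => ∃ t : Fin n, (t : ℕ) = k ∧ writeOO B σ (σ t) = true) <| by
      rintro _ hk ⟨t, rfl, ht⟩
      refine ⟨⟨t + 1, by omega⟩, rfl, ?_⟩
      by_contra hu
      exact hσ _ (wListOO_mul_swap_lt B σ hB (u := ⟨t + 1, by omega⟩) rfl ht (by simpa using hu))
  refine ⟨m, fun t ht => ⟨fun hw => (hm t ht).1 ⟨t, rfl, hw⟩, fun hle => ?_⟩⟩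
  obtain ⟨t', htt', hw⟩ := (hm t ht).2 hle
  rwa [Fin.ext htt'] at hw

/-- for a monotone order-oblivious protocol, if `σ` lexicographically
minimizes `w(σ)`, then `w(σ)` is a block of `0`'s followed by a block of `1`'s (followed
by the single `*`): there is an `m` such that the bit at position `t < n - 1` of `w(σ)` is
`1` iff `m ≤ t`. -/
theorem lex_minimal_word_structure {n : ℕ} (hn : 1 ≤ n)
    (B : Fin n → (Fin n → Option Bool) → Bool) (hB : MonotoneOO B)
    (σ : Equiv.Perm (Fin n))
    (hσ : ∀ τ : Equiv.Perm (Fin n), ¬ List.Lex (· < ·) (wListOO B τ) (wListOO B σ)) :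
    ∃ m : ℕ, ∀ t : Fin n, (t : ℕ) < n - 1 →
      (writeOO B σ (σ t) = true ↔ m ≤ (t : ℕ)) :=
  lex_minimal_word_structure_general B hB σ hσ
end
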